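/- arXiv:1211.1876 — 4 statements merged into one kernel-verified Lean document; each statement's English description precedes it below -/
import Mathlib

section
/- Let F be a field and G a finite group whose order is not divisible by the characteristic of F, and let V be a G-module. Then the Noether number satisfies β(F[V]^G) ≤ topdeg F[V]_G + 1; that is, the invariant ring F[V]^G is generated as an F-algebra by its homogeneous elements of degree at most topdeg F[V]_G + 1. -/
open MvPolynomial

variable {F G ι : Type*} [Field F] [Group G] [Fintype ι] [DecidableEq ι]

/-- The (left) action of a group element `σ` on the polynomial algebra
`F[V] = S(V^*)` presented as `MvPolynomial ι F`, for a matrix representation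
`ρ : G →* GL(ι, F)` of `G` on `V = (ι → F)`.  It is given by `σ • f = f ∘ σ⁻¹`,
i.e. by linear substitution of the variables using the matrix of `ρ σ⁻¹`. -/
noncomputable def polyAct (ρ : G →* (Matrix ι ι F)ˣ) (σ : G)
    (f : MvPolynomial ι F) : MvPolynomial ι F :=
  MvPolynomial.aeval
    (fun i => ∑ j, ((ρ σ⁻¹ : Matrix ι ι F) i j) • (MvPolynomial.X j : MvPolynomial ι F)) f

/-- A polynomial is invariant if it is fixed by the action of every group element. -/
def IsInv (ρ : G →* (Matrix ι ι F)ˣ) (f : MvPolynomial ι F) : Prop :=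
  ∀ σ : G, polyAct ρ σ f = f

/-- The Hilbert ideal: the ideal of `F[V]` generated by the homogeneous invariants
of positive degree. -/
noncomputable def hilbertIdeal (ρ : G →* (Matrix ι ι F)ˣ) : Ideal (MvPolynomial ι F) :=
  Ideal.span {f : MvPolynomial ι F | (∃ d, 0 < d ∧ f.IsHomogeneous d) ∧ IsInv ρ f}

/-- The top degree of the coinvariant algebra `F[V]_G = F[V]/(Hilbert ideal)`:
the largest degree `d` such that the degree-`d` homogeneous component of `F[V]_G`
is nonzero; since the Hilbert ideal is homogeneous this is the largest `d` for
which some homogeneous polynomial of degree `d` is not in the Hilbert ideal. -/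
noncomputable def topDeg (ρ : G →* (Matrix ι ι F)ˣ) : ℕ :=
  sSup {d : ℕ | ∃ f : MvPolynomial ι F, f.IsHomogeneous d ∧ f ∉ hilbertIdeal ρ}

/-- The dimension of the coinvariant algebra `F[V]_G` as an `F`-vector space. -/
noncomputable def coinvDim (ρ : G →* (Matrix ι ι F)ˣ) : ℕ :=
  Module.finrank F (MvPolynomial ι F ⧸ hilbertIdeal ρ)

/-- The invariant ring `F[V]^G` as a subalgebra of `F[V]`. -/
noncomputable def invAlg (ρ : G →* (Matrix ι ι F)ˣ) : Subalgebra F (MvPolynomial ι F) where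
  carrier := {f | IsInv ρ f}
  mul_mem' := by
    intro a b ha hb σ
    have h : polyAct ρ σ (a * b) = polyAct ρ σ a * polyAct ρ σ b :=
      map_mul (MvPolynomial.aeval _) a b
    rw [h, ha σ, hb σ]
  add_mem' := by
    intro a b ha hb σ
    have h : polyAct ρ σ (a + b) = polyAct ρ σ a + polyAct ρ σ b :=
      map_add (MvPolynomial.aeval _) a b
    rw [h, ha σ, hb σ]
  algebraMap_mem' := by
    intro r σ
    exact (MvPolynomial.aeval _).commutes r

/-! The Hilbert ideal `I` contains `x_i ^ |G|` (the orbit polynomial of `x_i` is monic with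
invariant coefficients), so `topDeg` is finite and every homogeneous polynomial of degree
`> topDeg` lies in `I`. A homogeneous invariant `f` of degree `d > topDeg + 1` therefore lies in
`𝔪 I`, with `𝔪` the polynomials without constant term: `f = ∑ q_j g_j` with `q_j ∈ 𝔪` and `g_j`
homogeneous invariants of positive degree. Taking degree-`d` components and applying the Reynolds
operator `R` gives `f = ∑ R(q_j') g_j`, where `q_j'` is the component of `q_j` of degree
`d - deg g_j`; both factors are invariants of degree `< d` (the first is nonconstant since
`q_j ∈ 𝔪`), and induction on `d` concludes. -/

namespace MvPolynomial

variable {σ R : Type*} [CommSemiring R]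

section

attribute [local instance] MvPolynomial.gradedAlgebra

theorem homogeneousComponent_mul_of_isHomogeneous_right {p q : MvPolynomial σ R} {m : ℕ}
    (hq : q.IsHomogeneous m) (n : ℕ) :
    homogeneousComponent n (p * q) = if m ≤ n then homogeneousComponent (n - m) p * q else 0 := by
  simp only [← decomposition.decompose'_apply]
  exact DirectSum.coe_decompose_mul_of_right_mem (homogeneousSubmodule σ R) n hq

end

theorem map_homogeneousComponent_of_isHomogeneous {φ : MvPolynomial σ R →ₗ[R] MvPolynomial σ R}
    (hφ : ∀ n p, p.IsHomogeneous n → (φ p).IsHomogeneous n) (n : ℕ) (p : MvPolynomial σ R) :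
    φ (homogeneousComponent n p) = homogeneousComponent n (φ p) := by
  induction p using MvPolynomial.induction_on' with
  | monomial d c =>
    have hd : (monomial d c).IsHomogeneous d.degree := isHomogeneous_monomial c rfl
    rw [homogeneousComponent_of_mem (hφ _ _ hd), homogeneousComponent_of_mem hd]
    split_ifs <;> simp
  | add p q hp hq => simp only [map_add, hp, hq]

theorem mem_ker_constantCoeff_mul_of_isHomogeneous {I : Ideal (MvPolynomial σ R)} {n : ℕ}
    (hI : ∀ p : MvPolynomial σ R, p.IsHomogeneous n → p ∈ I) {f : MvPolynomial σ R}
    (hf : f.IsHomogeneous (n + 1)) : f ∈ RingHom.ker constantCoeff * I := by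
  have hf' : f ∈ homogeneousSubmodule σ R 1 * homogeneousSubmodule σ R n := by
    rwa [← homogeneousSubmodule_one_pow R n, ← pow_succ', homogeneousSubmodule_one_pow]
  refine (Submodule.mul_le (P := (RingHom.ker constantCoeff * I).restrictScalars R)).mpr
    (fun v hv p hp => Ideal.mul_mem_mul ?_ (hI p hp)) hf'
  rw [RingHom.mem_ker, constantCoeff_eq]
  exact IsHomogeneous.coeff_eq_zero hv (by simp)

theorem mem_of_isHomogeneous_of_X_pow_mem [Fintype σ] {I : Ideal (MvPolynomial σ R)} {N d : ℕ}
    (hX : ∀ i, (X i : MvPolynomial σ R) ^ N ∈ I) (hd : Fintype.card σ * (N - 1) < d)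
    {f : MvPolynomial σ R} (hf : f.IsHomogeneous d) : f ∈ I := by
  classical
  rw [f.as_sum]
  refine Ideal.sum_mem _ fun s hs => ?_
  have hsd : s.degree = d := by_contra fun h => mem_support_iff.mp hs (hf.coeff_eq_zero h)
  have hsum : ∑ _i : σ, (N - 1) < ∑ i, s i := by
    rw [← Finsupp.degree_eq_sum, hsd]
    simpa using hd
  obtain ⟨i, -, hi⟩ := Finset.exists_lt_of_sum_lt hsum
  have hle : Finsupp.single i N ≤ s := Finsupp.single_le_iff.mpr (by omega)
  have hsplit :
      monomial s (coeff s f) = monomial (s - Finsupp.single i N) (coeff s f) * X i ^ N := by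
    rw [X_pow_eq_monomial, monomial_mul, mul_one, tsub_add_cancel_of_le hle]
  rw [hsplit]
  exact Ideal.mul_mem_left _ _ (hX i)

end MvPolynomial

section Action

variable (ρ : G →* (Matrix ι ι F)ˣ)

noncomputable def polyActHom (σ : G) : MvPolynomial ι F →ₐ[F] MvPolynomial ι F :=
  aeval fun i => ∑ j, ((ρ σ⁻¹ : Matrix ι ι F) i j) • (X j : MvPolynomial ι F)

theorem coe_polyActHom (σ : G) : ⇑(polyActHom ρ σ) = polyAct ρ σ := rfl

theorem polyAct_one (f : MvPolynomial ι F) : polyAct ρ 1 f = f := by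
  suffices polyActHom ρ 1 = AlgHom.id F _ from DFunLike.congr_fun this f
  refine algHom_ext fun i => ?_
  simp [polyActHom, Matrix.one_apply]

theorem polyAct_polyAct (σ τ : G) (f : MvPolynomial ι F) :
    polyAct ρ σ (polyAct ρ τ f) = polyAct ρ (σ * τ) f := by
  suffices (polyActHom ρ σ).comp (polyActHom ρ τ) = polyActHom ρ (σ * τ) from
    DFunLike.congr_fun this f
  refine algHom_ext fun i => ?_
  simp only [polyActHom, AlgHom.comp_apply, aeval_X, map_sum, map_smul, Finset.smul_sum, smul_smul,
    mul_inv_rev, map_mul, Units.val_mul, Matrix.mul_apply, Finset.sum_smul]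
  exact Finset.sum_comm

theorem isHomogeneous_polyAct {f : MvPolynomial ι F} {n : ℕ} (hf : f.IsHomogeneous n) (σ : G) :
    (polyAct ρ σ f).IsHomogeneous n := by
  have hlin : ∀ i, (∑ j, ((ρ σ⁻¹ : Matrix ι ι F) i j) • (X j : MvPolynomial ι F)).IsHomogeneous 1 :=
    fun i => (mem_homogeneousSubmodule _ _).mp
      (Submodule.sum_mem _ fun j _ => Submodule.smul_mem _ _ (isHomogeneous_X F j))
  exact one_mul n ▸ hf.aeval _ hlin

theorem polyAct_homogeneousComponent (σ : G) (n : ℕ) (f : MvPolynomial ι F) :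
    polyAct ρ σ (homogeneousComponent n f) = homogeneousComponent n (polyAct ρ σ f) :=
  map_homogeneousComponent_of_isHomogeneous (φ := (polyActHom ρ σ).toLinearMap)
    (fun _ _ hp => isHomogeneous_polyAct ρ hp σ) n f

theorem isInv_homogeneousComponent {f : MvPolynomial ι F} (hf : IsInv ρ f) (n : ℕ) :
    IsInv ρ (homogeneousComponent n f) := fun σ => by
  rw [polyAct_homogeneousComponent, hf σ]

theorem homogeneousComponent_mem_hilbertIdeal {f : MvPolynomial ι F} (hf : IsInv ρ f) {n : ℕ}
    (hn : 0 < n) : homogeneousComponent n f ∈ hilbertIdeal ρ :=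
  Ideal.subset_span ⟨⟨n, hn, homogeneousComponent_isHomogeneous n f⟩, isInv_homogeneousComponent ρ hf n⟩

end Action

section FiniteGroup

variable [Fintype G] (ρ : G →* (Matrix ι ι F)ˣ)

noncomputable def reynolds : MvPolynomial ι F →ₗ[F] MvPolynomial ι F :=
  (Fintype.card G : F)⁻¹ • ∑ σ : G, (polyActHom ρ σ).toLinearMap

theorem reynolds_apply (f : MvPolynomial ι F) :
    reynolds ρ f = (Fintype.card G : F)⁻¹ • ∑ σ : G, polyAct ρ σ f := by
  simp [reynolds, coe_polyActHom]

theorem isInv_reynolds (f : MvPolynomial ι F) : IsInv ρ (reynolds ρ f) := fun τ => by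
  rw [reynolds_apply, ← coe_polyActHom, map_smul, map_sum]
  simp only [coe_polyActHom, polyAct_polyAct]
  exact congrArg _ (Equiv.sum_comp (Equiv.mulLeft τ) (fun σ => polyAct ρ σ f))

theorem reynolds_eq_self (hchar : (Fintype.card G : F) ≠ 0) {f : MvPolynomial ι F}
    (hf : IsInv ρ f) : reynolds ρ f = f := by
  simp only [reynolds_apply, hf _, Finset.sum_const, Finset.card_univ,
    ← Nat.cast_smul_eq_nsmul F, smul_smul, inv_mul_cancel₀ hchar, one_smul]

theorem reynolds_mul_of_isInv {g : MvPolynomial ι F} (hg : IsInv ρ g) (h : MvPolynomial ι F) :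
    reynolds ρ (h * g) = reynolds ρ h * g := by
  simp only [reynolds_apply, ← coe_polyActHom, map_mul]
  simp only [coe_polyActHom, hg _, ← Finset.sum_mul, smul_mul_assoc]

theorem isHomogeneous_reynolds {f : MvPolynomial ι F} {n : ℕ} (hf : f.IsHomogeneous n) :
    (reynolds ρ f).IsHomogeneous n := by
  rw [reynolds_apply, ← mem_homogeneousSubmodule]
  exact Submodule.smul_mem _ _ (Submodule.sum_mem _ fun σ _ => isHomogeneous_polyAct ρ hf σ)

noncomputable def orbitPoly (f : MvPolynomial ι F) : Polynomial (MvPolynomial ι F) :=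
  ∏ τ : G, (Polynomial.X - Polynomial.C (polyAct ρ τ f))

theorem orbitPoly_monic (f : MvPolynomial ι F) : (orbitPoly ρ f).Monic :=
  Polynomial.monic_prod_of_monic _ _ fun _ _ => Polynomial.monic_X_sub_C _

theorem natDegree_orbitPoly (f : MvPolynomial ι F) :
    (orbitPoly ρ f).natDegree = Fintype.card G :=
  Polynomial.natDegree_finsetProd_X_sub_C_eq_card _ _

theorem eval_orbitPoly_self (f : MvPolynomial ι F) : (orbitPoly ρ f).eval f = 0 := by
  rw [orbitPoly, Polynomial.eval_prod]
  exact Finset.prod_eq_zero (Finset.mem_univ 1) (by simp [polyAct_one])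

theorem isInv_coeff_orbitPoly (f : MvPolynomial ι F) (k : ℕ) :
    IsInv ρ ((orbitPoly ρ f).coeff k) := fun σ => by
  have hmap : (orbitPoly ρ f).map (polyActHom ρ σ : MvPolynomial ι F →+* MvPolynomial ι F) =
      orbitPoly ρ f := by
    simp only [orbitPoly, Polynomial.map_prod, Polynomial.map_sub, Polynomial.map_X,
      Polynomial.map_C, RingHom.coe_coe, coe_polyActHom, polyAct_polyAct]
    exact Equiv.prod_comp (Equiv.mulLeft σ) (fun τ => Polynomial.X - Polynomial.C (polyAct ρ τ f))
  simpa [Polynomial.coeff_map, coe_polyActHom] using congr_arg (Polynomial.coeff · k) hmap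

theorem pow_card_mem_hilbertIdeal {f : MvPolynomial ι F} {e : ℕ} (hf : f.IsHomogeneous e)
    (he : 0 < e) : f ^ Fintype.card G ∈ hilbertIdeal ρ := by
  set N := Fintype.card G
  have hroot : f ^ N = -∑ k ∈ Finset.range N, (orbitPoly ρ f).coeff k * f ^ k := by
    have h := congr_arg (Polynomial.eval f) (orbitPoly_monic ρ f).as_sum
    simp only [eval_orbitPoly_self, natDegree_orbitPoly, Polynomial.eval_add, Polynomial.eval_pow,
      Polynomial.eval_X, Polynomial.eval_finsetSum, Polynomial.eval_mul, Polynomial.eval_C] at h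
    exact eq_neg_of_add_eq_zero_left h.symm
  rw [← homogeneousComponent_eq_self (hf.pow N), hroot, map_neg, map_sum]
  refine neg_mem (Ideal.sum_mem _ fun k hk => ?_)
  have hlt : e * k < e * N := Nat.mul_lt_mul_of_pos_left (Finset.mem_range.mp hk) he
  rw [homogeneousComponent_mul_of_isHomogeneous_right (hf.pow k), if_pos hlt.le]
  exact Ideal.mul_mem_right _ _
    (homogeneousComponent_mem_hilbertIdeal ρ (isInv_coeff_orbitPoly ρ f k) (by omega))

theorem mem_hilbertIdeal_of_topDeg_lt {d : ℕ} (hd : topDeg ρ < d) {f : MvPolynomial ι F}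
    (hf : f.IsHomogeneous d) : f ∈ hilbertIdeal ρ := by
  by_contra hfI
  have hbdd : BddAbove {e | ∃ g : MvPolynomial ι F, g.IsHomogeneous e ∧ g ∉ hilbertIdeal ρ} :=
    ⟨Fintype.card ι * (Fintype.card G - 1), fun e ⟨g, hg, hgI⟩ => not_lt.mp fun he =>
      hgI (mem_of_isHomogeneous_of_X_pow_mem
        (fun i => pow_card_mem_hilbertIdeal ρ (isHomogeneous_X F i) one_pos) he hg)⟩
  exact hd.not_ge (le_csSup hbdd ⟨f, hf, hfI⟩)

variable {ρ} {A : Subalgebra F (MvPolynomial ι F)} {d : ℕ}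

theorem reynolds_homogeneousComponent_mul_mem
    (hA : ∀ e < d, ∀ f : MvPolynomial ι F, f.IsHomogeneous e → IsInv ρ f → f ∈ A)
    {q : MvPolynomial ι F} (hq : constantCoeff q = 0) {g : MvPolynomial ι F} {e : ℕ} (he : 0 < e)
    (hge : g.IsHomogeneous e) (hg : IsInv ρ g) :
    reynolds ρ (homogeneousComponent d (q * g)) ∈ A := by
  rw [homogeneousComponent_mul_of_isHomogeneous_right hge]
  split_ifs with hed
  · rw [reynolds_mul_of_isInv ρ hg]
    rcases Nat.eq_zero_or_pos (d - e) with hde | hde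
    · simp [hde, homogeneousComponent_zero, ← constantCoeff_eq, hq]
    · exact A.mul_mem (hA _ (by omega) _ (isHomogeneous_reynolds ρ
        (homogeneousComponent_isHomogeneous _ _)) (isInv_reynolds ρ _)) (hA e (by omega) g hge hg)
  · simp

theorem reynolds_homogeneousComponent_mem
    (hA : ∀ e < d, ∀ f : MvPolynomial ι F, f.IsHomogeneous e → IsInv ρ f → f ∈ A)
    {p : MvPolynomial ι F} (hp : p ∈ RingHom.ker constantCoeff * hilbertIdeal ρ) :
    reynolds ρ (homogeneousComponent d p) ∈ A := by
  refine Submodule.mul_induction_on hp (fun q hq g hg => ?_)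
    (fun x y hx hy => by simpa only [map_add] using A.add_mem hx hy)
  induction hg using Submodule.span_induction generalizing q with
  | mem g hg =>
    obtain ⟨⟨e, he, hge⟩, hginv⟩ := hg
    exact reynolds_homogeneousComponent_mul_mem hA hq he hge hginv
  | zero => simp
  | add g g' _ _ ih ih' =>
    rw [mul_add, map_add, map_add]
    exact A.add_mem (ih q hq) (ih' q hq)
  | smul a g _ ih =>
    rw [smul_eq_mul, ← mul_assoc]
    exact ih _ (Ideal.mul_mem_right a _ hq)

variable (ρ)

theorem mem_adjoin_of_isHomogeneous (hchar : (Fintype.card G : F) ≠ 0) {f : MvPolynomial ι F}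
    (hf : f.IsHomogeneous d) (hinv : IsInv ρ f) :
    f ∈ Algebra.adjoin F {f : MvPolynomial ι F |
      (∃ d ≤ topDeg ρ + 1, f.IsHomogeneous d) ∧ IsInv ρ f} := by
  induction d using Nat.strong_induction_on generalizing f with
  | _ d ih =>
  by_cases hd : d ≤ topDeg ρ + 1
  · exact Algebra.subset_adjoin ⟨⟨d, hd, hf⟩, hinv⟩
  obtain ⟨n, rfl⟩ : ∃ n, d = n + 1 := ⟨d - 1, by omega⟩
  have hmem := mem_ker_constantCoeff_mul_of_isHomogeneous
    (fun p hp => mem_hilbertIdeal_of_topDeg_lt ρ (by omega) hp) hf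
  have hfix : f = reynolds ρ (homogeneousComponent (n + 1) f) := by
    rw [homogeneousComponent_eq_self hf, reynolds_eq_self ρ hchar hinv]
  rw [hfix]
  exact reynolds_homogeneousComponent_mem (fun e he g hg hginv => ih e he hg hginv) hmem

end FiniteGroup

/-- In the non-modular case the Noether number satisfies
`β(F[V]^G) ≤ topdeg F[V]_G + 1`: the invariant ring is generated as an
`F`-algebra by its homogeneous elements of degree at most `topdeg F[V]_G + 1`. -/
theorem noether_number_le_topDeg_succ [Fintype G] (ρ : G →* (Matrix ι ι F)ˣ)
    (hchar : (Fintype.card G : F) ≠ 0) :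
    Algebra.adjoin F {f : MvPolynomial ι F |
        (∃ d ≤ topDeg ρ + 1, f.IsHomogeneous d) ∧ IsInv ρ f} = invAlg ρ := by
  refine le_antisymm (Algebra.adjoin_le fun f hf => hf.2) fun f hf => ?_
  rw [← sum_homogeneousComponent f]
  exact Subalgebra.sum_mem _ fun k _ => mem_adjoin_of_isHomogeneous ρ hchar
    (homogeneousComponent_isHomogeneous k f) (isInv_homogeneousComponent ρ hf k)
end

section
/- Let F be a field and G a finite group whose order is not divisible by the characteristic of F, and let V be a G-module. Then topdeg F[V]_G + 1 ≤ |G|; that is, every monomial in F[V] of degree at least |G| lies in the Hilbert ideal. -/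
/-!
A homogeneous polynomial of degree at least `|G|` lies in `(x₁, …, xₙ) ^ |G|`, so it suffices that
every product `∏ τ, a τ` of homogeneous polynomials of positive degree indexed by `G` lies in the
Hilbert ideal (Fogarty). With `b τ = τ⁻¹ • a τ`, the product `∏ τ, (a τ - σ • b τ)` vanishes for
every `σ`, as its `σ`-th factor does. Expanding it and summing over `σ` writes `|G| ∏ τ, a τ` as a
combination of transfers `∑ σ, σ • ∏ τ ∈ t, b τ` with `t` nonempty, which are homogeneous
invariants of positive degree; and `|G|` is invertible in `F`.
-/

open MvPolynomial

variable {F G ι : Type*} [Field F] [Group G] [Fintype ι] [DecidableEq ι]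

namespace polyAct

variable (ρ : G →* (Matrix ι ι F)ˣ)

noncomputable def algHom (σ : G) : MvPolynomial ι F →ₐ[F] MvPolynomial ι F :=
  aeval fun i => ∑ j, ((ρ σ⁻¹ : Matrix ι ι F) i j) • (X j : MvPolynomial ι F)

theorem coe_algHom (σ : G) : ⇑(algHom ρ σ) = polyAct ρ σ := rfl

theorem algHom_one : algHom ρ 1 = AlgHom.id F (MvPolynomial ι F) := by
  ext i
  simp [algHom, Matrix.one_apply, ite_smul]

theorem algHom_mul (σ τ : G) : algHom ρ (σ * τ) = (algHom ρ σ).comp (algHom ρ τ) := by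
  ext i
  simp only [algHom, AlgHom.comp_apply, aeval_X, map_sum, map_smul, mul_inv_rev, map_mul,
    Units.val_mul, Matrix.mul_apply, Finset.sum_smul, Finset.smul_sum, smul_smul]
  rw [Finset.sum_comm]

theorem algHom_inv_apply_self (σ : G) (f : MvPolynomial ι F) :
    algHom ρ σ (algHom ρ σ⁻¹ f) = f := by
  rw [← AlgHom.comp_apply, ← algHom_mul, mul_inv_cancel, algHom_one, AlgHom.id_apply]

theorem isHomogeneous_algHom (σ : G) {f : MvPolynomial ι F} {d : ℕ}
    (hf : f.IsHomogeneous d) : (algHom ρ σ f).IsHomogeneous d := by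
  have hlin (i : ι) :
      (∑ j, ((ρ σ⁻¹ : Matrix ι ι F) i j) • (X j : MvPolynomial ι F)).IsHomogeneous 1 :=
    IsHomogeneous.sum _ _ _ fun j _ => by
      rw [smul_eq_C_mul]
      exact isHomogeneous_C_mul_X _ j
  exact (one_mul d) ▸ hf.aeval _ hlin

theorem isInv_sum_algHom [Fintype G] (f : MvPolynomial ι F) :
    IsInv ρ (∑ τ : G, algHom ρ τ f) := fun σ => by
  rw [← coe_algHom, map_sum]
  exact Fintype.sum_equiv (Equiv.mulLeft σ) _ _ fun τ => by
    simp [← AlgHom.comp_apply, ← algHom_mul]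

end polyAct

open polyAct

section Fogarty

variable [Fintype G] (ρ : G →* (Matrix ι ι F)ˣ)

theorem sum_algHom_mem_hilbertIdeal {f : MvPolynomial ι F} {d : ℕ} (hd : 0 < d)
    (hf : f.IsHomogeneous d) : ∑ τ : G, algHom ρ τ f ∈ hilbertIdeal ρ :=
  Ideal.subset_span ⟨⟨d, hd, IsHomogeneous.sum _ _ _ fun τ _ => isHomogeneous_algHom ρ τ hf⟩,
    isInv_sum_algHom ρ f⟩

theorem prod_mem_hilbertIdeal (hchar : (Fintype.card G : F) ≠ 0) (a : G → MvPolynomial ι F)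
    (d : G → ℕ) (hd : ∀ τ, 0 < d τ) (ha : ∀ τ, (a τ).IsHomogeneous (d τ)) :
    ∏ τ, a τ ∈ hilbertIdeal ρ := by
  classical
  set b : G → MvPolynomial ι F := fun τ => algHom ρ τ⁻¹ (a τ)
  set term : Finset G → MvPolynomial ι F :=
    fun t => (∑ σ : G, algHom ρ σ (∏ τ ∈ t, -b τ)) * ∏ τ ∈ tᶜ, a τ
  have hvanish (σ : G) : ∏ τ, (algHom ρ σ (-b τ) + a τ) = 0 :=
    Finset.prod_eq_zero (Finset.mem_univ σ) (by simp [b, algHom_inv_apply_self])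
  have hsum : ∑ t, term t = 0 := by
    simp only [term, Finset.sum_mul]
    rw [Finset.sum_comm]
    refine Finset.sum_eq_zero fun σ _ => ?_
    simpa [Fintype.prod_add] using hvanish σ
  have hterm (t : Finset G) (ht : t ≠ ∅) : term t ∈ hilbertIdeal ρ :=
    Ideal.mul_mem_right _ _ <| sum_algHom_mem_hilbertIdeal ρ
      (Finset.sum_pos (fun τ _ => hd τ) (Finset.nonempty_iff_ne_empty.mpr ht))
      (IsHomogeneous.prod _ _ _ fun τ _ => (isHomogeneous_algHom ρ _ (ha τ)).neg)
  have hterm_empty : term ∅ = (Fintype.card G : MvPolynomial ι F) * ∏ τ, a τ := by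
    simp [term]
  have hcard : IsUnit (Fintype.card G : MvPolynomial ι F) := by
    simpa using (isUnit_iff_ne_zero.mpr hchar).map (C : F →+* MvPolynomial ι F)
  rw [← Ideal.unit_mul_mem_iff_mem _ hcard, ← hterm_empty,
    ← Ideal.add_mem_iff_left _ (Ideal.sum_mem _ fun t ht => hterm t (Finset.ne_of_mem_erase ht)),
    Finset.add_sum_erase _ _ (Finset.mem_univ _), hsum]
  exact zero_mem _

theorem idealOfVars_pow_card_le_hilbertIdeal (hchar : (Fintype.card G : F) ≠ 0) :
    idealOfVars ι F ^ Fintype.card G ≤ hilbertIdeal ρ := by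
  rw [← Finset.card_univ, ← Finset.prod_const, Ideal.prod_span, Ideal.span_le]
  intro _ h
  obtain ⟨a, ha, rfl⟩ := (Set.mem_finsetProd _ _ _).mp h
  choose i hi using fun τ => ha (Finset.mem_univ τ)
  exact prod_mem_hilbertIdeal ρ hchar a 1 (fun _ => one_pos) fun τ => hi τ ▸ isHomogeneous_X F _

theorem mem_hilbertIdeal_of_isHomogeneous (hchar : (Fintype.card G : F) ≠ 0)
    {f : MvPolynomial ι F} {d : ℕ} (hf : f.IsHomogeneous d) (hd : Fintype.card G ≤ d) :
    f ∈ hilbertIdeal ρ :=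
  idealOfVars_pow_card_le_hilbertIdeal ρ hchar <| (mem_pow_idealOfVars_iff _ f).mpr fun x hx => by
    rwa [Finsupp.degree_eq_weight_one, ← Pi.one_def, hf (mem_support_iff.mp hx)]

end Fogarty

/-- In the non-modular case, `topdeg F[V]_G + 1 ≤ |G|`. -/
theorem topDeg_succ_le_card [Fintype G] (ρ : G →* (Matrix ι ι F)ˣ)
    (hchar : (Fintype.card G : F) ≠ 0) :
    topDeg ρ + 1 ≤ Fintype.card G := by
  have htop : topDeg ρ ≤ Fintype.card G - 1 := csSup_le' fun d ⟨f, hf, hfH⟩ => by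
    by_contra! hd
    exact hfH (mem_hilbertIdeal_of_isHomogeneous ρ hchar hf (by omega))
  have := Fintype.card_pos (α := G)
  omega
end

section
/- Let A be a commutative ring with identity, G a finite group of ring automorphisms of A such that the order of G is invertible in A, and J ⊆ A a G-stable ideal. Then J^{|G|} ⊆ J^G · A, where J^G denotes the set of G-invariant elements of J and J^G · A is the ideal of A it generates. -/
/-!
For `a : G → J`, the sum `∑_τ ∏_σ (a σ - (τ σ) • a σ)` vanishes, since the factor at
`σ = τ⁻¹` is zero. Expanding each product over subsets `S ⊆ G` and summing over `τ` first
turns it into `∑_S (∏_{σ ∈ S} a σ) · Tr(∏_{σ ∉ S} -(σ • a σ))`, where `Tr z = ∑_τ τ • z`.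
The term `S = G` is `|G| · ∏_σ a σ`; every other transfer is that of a nonempty product of
elements of `J`, hence lies in `J^G`. So `|G| · ∏_σ a σ ∈ J^G · A`, and `J^{|G|}` is
spanned by such products.
-/

open Finset
open scoped Pointwise

section Fogarty

variable {A : Type*} [CommRing A] {G : Type*} [Group G] [Fintype G] [MulSemiringAction G A]

theorem sum_smul_mem_span_invariants {J : Ideal A} (hJ : ∀ (σ : G), ∀ x ∈ J, σ • x ∈ J)
    {z : A} (hz : z ∈ J) :
    ∑ τ : G, τ • z ∈ Ideal.span {x : A | x ∈ J ∧ ∀ σ : G, σ • x = x} := by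
  refine Ideal.subset_span ⟨sum_mem fun τ _ => hJ τ z hz, fun σ => ?_⟩
  rw [smul_sum]
  exact Fintype.sum_equiv (Equiv.mulLeft σ) _ _ fun τ => by simp [mul_smul]

theorem sum_prod_sub_smul_eq_zero (a : G → A) :
    ∑ τ : G, ∏ σ : G, (a σ - τ • σ • a σ) = 0 :=
  sum_eq_zero fun τ _ => prod_eq_zero (mem_univ τ⁻¹) (by simp [smul_smul])

theorem sum_prod_sub_smul_eq_sum_powerset [DecidableEq G] (a : G → A) :
    ∑ τ : G, ∏ σ : G, (a σ - τ • σ • a σ) =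
      ∑ S ∈ (univ : Finset G).powerset,
        (∏ σ ∈ S, a σ) * ∑ τ : G, τ • ∏ σ ∈ univ \ S, -(σ • a σ) := by
  simp_rw [sub_eq_add_neg, prod_add, mul_sum, smul_prod', smul_neg]
  exact sum_comm

theorem card_mul_prod_mem_span_invariants {J : Ideal A}
    (hJ : ∀ (σ : G), ∀ x ∈ J, σ • x ∈ J) (a : G → A) (ha : ∀ σ, a σ ∈ J) :
    (Fintype.card G : A) * ∏ σ, a σ ∈ Ideal.span {x : A | x ∈ J ∧ ∀ σ : G, σ • x = x} := by
  classical
  have hsum := sum_prod_sub_smul_eq_zero a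
  rw [sum_prod_sub_smul_eq_sum_powerset, ← add_sum_erase _ _ (mem_powerset_self _)] at hsum
  have htop : (∏ σ, a σ) * ∑ τ : G, τ • ∏ σ ∈ univ \ univ, -(σ • a σ) =
      (Fintype.card G : A) * ∏ σ, a σ := by
    simp [mul_comm]
  rw [htop, add_eq_zero_iff_eq_neg] at hsum
  rw [hsum]
  refine neg_mem (sum_mem fun S hS => Ideal.mul_mem_left _ _ ?_)
  obtain ⟨σ₀, hσ₀⟩ : (univ \ S).Nonempty :=
    sdiff_nonempty.2 fun h => (ne_of_mem_erase hS) (univ_subset_iff.1 h)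
  refine sum_smul_mem_span_invariants hJ (?_ : _ ∈ J)
  rw [← mul_prod_erase _ _ hσ₀]
  exact J.mul_mem_right _ (J.neg_mem (hJ σ₀ _ (ha σ₀)))

theorem prod_mem_span_invariants (hunit : IsUnit (Fintype.card G : A)) {J : Ideal A}
    (hJ : ∀ (σ : G), ∀ x ∈ J, σ • x ∈ J) (a : G → A) (ha : ∀ σ, a σ ∈ J) :
    ∏ σ, a σ ∈ Ideal.span {x : A | x ∈ J ∧ ∀ σ : G, σ • x = x} :=
  (Ideal.unit_mul_mem_iff_mem _ hunit).1 (card_mul_prod_mem_span_invariants hJ a ha)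

end Fogarty

/-- **Fogarty's lemma.** If a finite group `G` acts on a commutative
ring `A` by ring automorphisms, `|G|` is invertible in `A`, and `J ⊆ A` is a
`G`-stable ideal, then `J^{|G|} ⊆ J^G · A`. -/
theorem pow_card_le_span_invariants {A : Type*} [CommRing A] {G : Type*} [Group G]
    [Fintype G] [MulSemiringAction G A] (hunit : IsUnit ((Fintype.card G : A)))
    (J : Ideal A) (hJ : ∀ (σ : G), ∀ x ∈ J, σ • x ∈ J) :
    J ^ (Fintype.card G) ≤ Ideal.span {x : A | x ∈ J ∧ ∀ σ : G, σ • x = x} := by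
  calc J ^ Fintype.card G = ∏ _σ : G, Ideal.span (J : Set A) := by
        rw [Ideal.span_eq, prod_const, card_univ]
    _ = Ideal.span (∏ _σ : G, (J : Set A)) := Ideal.prod_span _ _
    _ ≤ _ := by
        rw [Ideal.span_le]
        intro x hx
        obtain ⟨a, ha, rfl⟩ := (Set.mem_fintype_prod _ x).1 hx
        exact prod_mem_span_invariants hunit hJ a ha
end

section
/- Let F be a field, G a finite group with |G| not divisible by the characteristic of F, and V a G-module with A := F[V] = F[x_1,…,x_n] and B := F[V^m] = F[x_{1,1},…,x_{n,m}]. Let φ : A → B[t_1,…,t_m] be the algebra homomorphism sending x_i to x_{i,1}t_1 + … + x_{i,m}t_m, and for f ∈ A write φ(f) = Σ f_{i_1,…,i_m} t_1^{i_1}⋯t_m^{i_m} with coefficients f_{i_1,…,i_m} ∈ B (the polarizations of f). If f lies in the Hilbert ideal I_A = A^G_+ A, then every polarization f_{i_1,…,i_m} lies in the Hilbert ideal I_B = B^G_+ B. -/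
/-!
Polarization `φ` is an algebra map that commutes with the action of `G`, which acts on
`F[V^m][t]` through the coefficients. It sends each `x_i` to `∑ₖ x_{i,k} tₖ`, whose
`t`-coefficients are of degree one, so `φ` maps a homogeneous polynomial of degree `D` to one
whose `t`-coefficients are all homogeneous of degree `D`. Hence the `t`-coefficients of `φ g`,
for a homogeneous invariant `g` of positive degree, are again homogeneous invariants of positive
degree, and `φ` maps `I_A` into the ideal of polynomials with coefficients in `I_B`.
-/

open MvPolynomial

variable {F G ι : Type*} [Field F] [Group G] [Fintype ι] [DecidableEq ι]

/-- The representation of `G` on the direct sum `V^m` of `m` copies of `V`,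
given by block diagonal matrices. -/
noncomputable def glPow (ρ : G →* (Matrix ι ι F)ˣ) (m : ℕ) :
    G →* (Matrix (ι × Fin m) (ι × Fin m) F)ˣ :=
  (Units.map (Matrix.blockDiagonalRingHom ι (Fin m) F).toMonoidHom).comp
    ((Units.map (Pi.constRingHom (Fin m) (Matrix ι ι F)).toMonoidHom).comp ρ)

/-- Polarization: the algebra map `φ : F[V] → F[V^m][t₁,…,t_m]` sending
`x_i ↦ x_{i,1} t_1 + … + x_{i,m} t_m`.  The polarizations of `f ∈ F[V]` are the
coefficients of `φ f` with respect to the monomials in the `t`-variables. -/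
noncomputable def polarizeMap (m : ℕ) :
    MvPolynomial ι F →ₐ[F] MvPolynomial (Fin m) (MvPolynomial (ι × Fin m) F) :=
  MvPolynomial.aeval fun i =>
    ∑ k : Fin m, MvPolynomial.C (MvPolynomial.X (i, k)) * MvPolynomial.X k

section CoeffwiseGrading

variable {κ τ R : Type*} [CommSemiring R]

theorem MvPolynomial.IsHomogeneous.aeval_mem_graded {σ A : Type*} [CommSemiring A] [Algebra R A]
    (𝒜 : ℕ → Submodule R A) [SetLike.GradedMonoid 𝒜] {φ : MvPolynomial σ R} {D : ℕ}
    (hφ : φ.IsHomogeneous D) {g : σ → A} (hg : ∀ i, g i ∈ 𝒜 1) : MvPolynomial.aeval g φ ∈ 𝒜 D := by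
  rw [aeval_def, eval₂_eq]
  refine Submodule.sum_mem _ fun u hu => ?_
  have hdeg : ∑ i ∈ u.support, u i • 1 = D := by
    simpa [Finsupp.weight_apply, Finsupp.sum] using hφ (mem_support_iff.mp hu)
  rw [← zero_add D, ← hdeg]
  exact SetLike.mul_mem_graded (SetLike.algebraMap_mem_graded 𝒜 _)
    (SetLike.prod_pow_mem_graded 𝒜 _ _ _ fun i _ => hg i)

variable (κ τ R) in
def coeffHomogeneousSubmodule (D : ℕ) : Submodule R (MvPolynomial κ (MvPolynomial τ R)) where
  carrier := {g | ∀ d, g.coeff d ∈ homogeneousSubmodule τ R D}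
  add_mem' hg hh d := by rw [coeff_add]; exact add_mem (hg d) (hh d)
  zero_mem' d := by rw [coeff_zero]; exact zero_mem _
  smul_mem' c g hg d := by rw [coeff_smul]; exact Submodule.smul_mem _ c (hg d)

instance : SetLike.GradedMonoid (coeffHomogeneousSubmodule κ τ R) where
  one_mem d := by
    classical
    rw [coeff_one]
    split_ifs
    exacts [isHomogeneous_one _ _, isHomogeneous_zero _ _ _]
  mul_mem _ _ _ _ hg hh d := by
    classical
    rw [coeff_mul]
    exact IsHomogeneous.sum _ _ _ fun x _ => (hg x.1).mul (hh x.2)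

theorem C_mul_X_mem_coeffHomogeneousSubmodule {D : ℕ} {p : MvPolynomial τ R}
    (hp : p.IsHomogeneous D) (k : κ) :
    C p * X k ∈ coeffHomogeneousSubmodule κ τ R D := by
  classical
  intro d
  rw [coeff_C_mul, coeff_X]
  split_ifs
  exacts [(mul_one p).symm ▸ hp, (mul_zero p).symm ▸ isHomogeneous_zero _ _ _]

end CoeffwiseGrading

noncomputable def polyActAlgHom (ρ : G →* (Matrix ι ι F)ˣ) (σ : G) :
    MvPolynomial ι F →ₐ[F] MvPolynomial ι F :=
  aeval fun i => ∑ j, ((ρ σ⁻¹ : Matrix ι ι F) i j) • (X j : MvPolynomial ι F)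

theorem polyActAlgHom_apply (ρ : G →* (Matrix ι ι F)ˣ) (σ : G) (f : MvPolynomial ι F) :
    polyActAlgHom ρ σ f = polyAct ρ σ f :=
  rfl

theorem polyActAlgHom_glPow_X (ρ : G →* (Matrix ι ι F)ˣ) (m : ℕ) (σ : G) (i : ι) (k : Fin m) :
    polyActAlgHom (glPow ρ m) σ (X (i, k)) = ∑ j, ((ρ σ⁻¹ : Matrix ι ι F) i j) • X (j, k) := by
  simp [polyActAlgHom, glPow, Matrix.blockDiagonal_apply, Fintype.sum_prod_type, ite_smul]

theorem polarizeMap_comp_polyActAlgHom (ρ : G →* (Matrix ι ι F)ˣ) (m : ℕ) (σ : G) :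
    (polarizeMap m).comp (polyActAlgHom ρ σ) =
      (mapAlgHom (polyActAlgHom (glPow ρ m) σ)).comp (polarizeMap m) := by
  refine algHom_ext fun i => ?_
  have polarizeMap_X : ∀ j : ι, polarizeMap (F := F) m (X j) = ∑ k, C (X (j, k)) * X k :=
    fun j => aeval_X _ _
  have hX : polyActAlgHom ρ σ (X i) = ∑ j, ((ρ σ⁻¹ : Matrix ι ι F) i j) • X j := aeval_X _ _
  rw [AlgHom.comp_apply, AlgHom.comp_apply, hX, polarizeMap_X]
  simp only [map_sum, map_smul, polarizeMap_X, mapAlgHom_apply, map_mul, map_C, map_X,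
    AlgHom.coe_toRingHom, polyActAlgHom_glPow_X, Finset.smul_sum, Finset.sum_mul]
  rw [Finset.sum_comm]
  refine Finset.sum_congr rfl fun k _ => Finset.sum_congr rfl fun j _ => ?_
  rw [Algebra.smul_def, Algebra.smul_def, map_mul, mul_assoc]
  rfl

theorem IsInv.coeff_polarizeMap {ρ : G →* (Matrix ι ι F)ˣ} {f : MvPolynomial ι F}
    (hf : IsInv ρ f) (m : ℕ) (d : Fin m →₀ ℕ) :
    IsInv (glPow ρ m) ((polarizeMap m f).coeff d) := by
  intro σ
  calc polyAct (glPow ρ m) σ ((polarizeMap m f).coeff d)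
      = (map (polyActAlgHom (glPow ρ m) σ).toRingHom (polarizeMap m f)).coeff d :=
        (coeff_map _ _ _).symm
    _ = (polarizeMap m (polyActAlgHom ρ σ f)).coeff d := by
        rw [← AlgHom.comp_apply (polarizeMap m), polarizeMap_comp_polyActAlgHom]; rfl
    _ = (polarizeMap m f).coeff d := by rw [polyActAlgHom_apply, hf σ]

theorem map_polarizeMap_hilbertIdeal_le (ρ : G →* (Matrix ι ι F)ˣ) (m : ℕ) :
    (hilbertIdeal ρ).map (polarizeMap m) ≤ (hilbertIdeal (glPow ρ m)).map C := by
  rw [hilbertIdeal, Ideal.map_span, Ideal.span_le]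
  rintro _ ⟨f, ⟨⟨D, hD, hhom : f.IsHomogeneous D⟩, hinv⟩, rfl⟩
  have hpol : polarizeMap m f ∈ coeffHomogeneousSubmodule (Fin m) (ι × Fin m) F D :=
    hhom.aeval_mem_graded _ fun i =>
      Submodule.sum_mem _ fun k _ => C_mul_X_mem_coeffHomogeneousSubmodule (isHomogeneous_X _ _) k
  exact mem_map_C_iff.2 fun d => Ideal.subset_span ⟨⟨D, hD, hpol d⟩, hinv.coeff_polarizeMap m d⟩

theorem polarization_mem_hilbertIdeal_general
    (ρ : G →* (Matrix ι ι F)ˣ) (m : ℕ) (f : MvPolynomial ι F)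
    (hf : f ∈ hilbertIdeal ρ) (d : Fin m →₀ ℕ) :
    MvPolynomial.coeff d (polarizeMap m f) ∈ hilbertIdeal (glPow ρ m) :=
  mem_map_C_iff.1 (map_polarizeMap_hilbertIdeal_le ρ m (Ideal.mem_map_of_mem _ hf)) d

/-- If `f` lies in the Hilbert ideal `I_A = A^G_+ A` of
`A = F[V]`, then every polarization of `f` lies in the Hilbert ideal
`I_B = B^G_+ B` of `B = F[V^m]`. -/
theorem polarization_mem_hilbertIdeal [Fintype G] (hchar : (Fintype.card G : F) ≠ 0)
    (ρ : G →* (Matrix ι ι F)ˣ) (m : ℕ) (f : MvPolynomial ι F)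
    (hf : f ∈ hilbertIdeal ρ) (d : Fin m →₀ ℕ) :
    MvPolynomial.coeff d (polarizeMap m f) ∈ hilbertIdeal (glPow ρ m) :=
  polarization_mem_hilbertIdeal_general ρ m f hf d
end
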